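/- arXiv:2204.04547 — 7 statements merged into one kernel-verified Lean document; each statement's English description precedes it below -/
import Mathlib

section
/- For every even integer n ≥ 6, the area of the regular small n-gon, namely (n/8)·sin(2π/n), is strictly less than the Foster–Szabo bound (n/2)·sin(π/n) − ((n−1)/2)·tan(π/(2n−2)). -/
open Real

/-
With `x = π / N` and `t = π / (2N - 2)` one has `(N - 1) / 2 * t = π / 4` and `N * x = π`, so after
`sin 2x = 2 sin x cos x` the claim reads `(N - 1) / 2 * tan t < N / 4 * sin x * (2 - cos x)`.
Bounding `tan t < t / (1 - t² / 2)` and `sin x`, `cos x` by their Taylor polynomials (the `5 / 96`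
is the remainder constant of `Real.cos_bound`) reduces this to a polynomial inequality in `x²`, which holds since `t ≤ 3x / 5` and `x ≤ π / 6` once `N ≥ 6`.
-/

lemma one_lt_taylor_product {y : ℝ} (hy0 : 0 < y) (hy1 : y ≤ 3 / 10) :
    1 < (1 - y / 6) * (1 + y / 2 - 5 / 96 * y ^ 2) * (1 - 9 / 50 * y) := by
  nlinarith [mul_pos hy0 hy0, mul_pos (mul_pos hy0 hy0) hy0, mul_nonneg hy0.le (sub_nonneg.2 hy1)]

lemma tan_lt_div_one_sub_sq_div_two {t : ℝ} (ht0 : 0 < t) (ht2 : t ^ 2 < 2) :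
    tan t < t / (1 - t ^ 2 / 2) := by
  rw [tan_eq_sin_div_cos]
  exact div_lt_div₀ (sin_lt ht0) one_sub_sq_div_two_le_cos ht0.le (by linarith)

lemma cos_le_one_sub_sq_div_two_add {x : ℝ} (hx : |x| ≤ 1) :
    cos x ≤ 1 - x ^ 2 / 2 + 5 / 96 * x ^ 4 := by
  have h := (abs_le.1 (cos_bound hx)).2
  rwa [pow_abs, abs_of_nonneg (by positivity : 0 ≤ x ^ 4), sub_le_iff_le_add', mul_comm] at h

lemma taylor_le_sin_mul_two_sub_cos {x : ℝ} (hx0 : 0 ≤ x) (hx1 : x ≤ 1) :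
    (x - x ^ 3 / 6) * (1 + x ^ 2 / 2 - 5 / 96 * x ^ 4) ≤ sin x * (2 - cos x) := by
  have hcos := cos_le_one_sub_sq_div_two_add (abs_le.2 ⟨by linarith, hx1⟩)
  have hsin : 0 ≤ sin x := sin_nonneg_of_nonneg_of_le_pi hx0 (by linarith [pi_gt_three])
  refine mul_le_mul (sin_ge_sub_cube hx0) (by linarith) ?_ hsin
  nlinarith [pow_le_one₀ hx0 hx1 (n := 2), pow_le_one₀ hx0 hx1 (n := 4)]

theorem foster_szabo_bound_gt_regular_area {N : ℝ} (hN : 6 ≤ N) :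
    N / 8 * sin (2 * π / N) < N / 2 * sin (π / N) - (N - 1) / 2 * tan (π / (2 * N - 2)) := by
  set x := π / N with hx
  set t := π / (2 * N - 2) with ht
  have hx0 : 0 < x := by positivity
  have hx1 : x ≤ 53 / 100 := by
    rw [hx, div_le_iff₀ (by positivity)]; nlinarith [pi_lt_d2]
  have ht0 : 0 < t := div_pos pi_pos (by linarith)
  have htx : t ≤ 3 / 5 * x := by
    rw [ht, hx, ← mul_div_assoc, div_le_div_iff₀ (by linarith) (by positivity)]
    nlinarith [mul_le_mul_of_nonneg_left hN pi_pos.le]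
  have hNx : N * x = π := by rw [hx]; field_simp
  have hNt : (N - 1) / 2 * t = π / 4 := by
    rw [ht]; field_simp [(show (0 : ℝ) < N - 1 by linarith).ne']; ring
  have hx2 : x ^ 2 ≤ 3 / 10 := by nlinarith
  have ht2 : t ^ 2 ≤ 9 / 25 * x ^ 2 := by nlinarith
  have hden : 0 < 1 - 9 / 50 * x ^ 2 := by nlinarith
  have key : (N - 1) / 2 * tan t < N / 4 * (sin x * (2 - cos x)) :=
    calc (N - 1) / 2 * tan t < (N - 1) / 2 * (t / (1 - t ^ 2 / 2)) := by
          gcongr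
          · linarith
          · exact tan_lt_div_one_sub_sq_div_two ht0 (by nlinarith)
      _ = π / 4 / (1 - t ^ 2 / 2) := by rw [mul_div_assoc', hNt]
      _ ≤ π / 4 / (1 - 9 / 50 * x ^ 2) := by gcongr; linarith
      _ < π / 4 * ((1 - x ^ 2 / 6) * (1 + x ^ 2 / 2 - 5 / 96 * x ^ 4)) := by
          rw [div_lt_iff₀ hden, mul_assoc, lt_mul_iff_one_lt_right (by positivity)]
          exact (one_lt_taylor_product (pow_pos hx0 2) hx2).trans_eq (by ring)
      _ = N / 4 * ((x - x ^ 3 / 6) * (1 + x ^ 2 / 2 - 5 / 96 * x ^ 4)) := by rw [← hNx]; ring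
      _ ≤ N / 4 * (sin x * (2 - cos x)) := by
          gcongr _ * ?_
          exact taylor_le_sin_mul_two_sub_cos hx0.le (by linarith)
  rw [mul_div_assoc, ← hx, sin_two_mul]
  linarith

theorem regular_ngon_lt_foster_szabo_general (n : ℕ) (hn : 6 ≤ n) :
    (n : ℝ) / 8 * Real.sin (2 * π / n) <
      (n : ℝ) / 2 * Real.sin (π / n) - ((n : ℝ) - 1) / 2 * Real.tan (π / (2 * n - 2)) :=
  foster_szabo_bound_gt_regular_area (by exact_mod_cast hn)

theorem regular_ngon_lt_foster_szabo (n : ℕ) (hn : 6 ≤ n) (he : Even n) :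
    (n : ℝ) / 8 * Real.sin (2 * π / n) <
      (n : ℝ) / 2 * Real.sin (π / n) - ((n : ℝ) - 1) / 2 * Real.tan (π / (2 * n - 2)) :=
  regular_ngon_lt_foster_szabo_general n hn
end

section
/- As n → ∞ through even integers, Ā_n = (n/2)·sin(π/n) − ((n−1)/2)·tan(π/(2n−2)) satisfies Ā_n = π/4 − 5π³/(48n²) − π³/(24n³) + O(1/n⁴); i.e., there exist constants C and N such that |Ā_n − π/4 + 5π³/(48n²) + π³/(24n³)| ≤ C/n⁴ for all n ≥ N. -/
/-!
Both terms of `Ā_n` are of the form `y·f(π/y)` with `f = sin` (`y = n`) or `f = tan` (`y = 2n - 2`),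
so the quintic Taylor remainders of `sin` and `tan` at `π/y` only contribute `O(y⁻⁴)`. The cubic
Taylor polynomials give `Ā_n = π/4 - π³/48 · (4/n² + 1/(n-1)²) + O(n⁻⁴)`, and this differs from the
claimed expansion by the rational function `π³/48 · (1/n² + 2/n³ - 1/(n-1)²) = O(n⁻⁴)`.
-/

open Real

theorem Real.tan_bound {x : ℝ} (hx : |x| ≤ 1) : |tan x - (x + x ^ 3 / 3)| ≤ |x| ^ 5 := by
  have hcos_pos : 0 < cos x := cos_pos_of_le_one hx
  have hcos : 43 / 96 ≤ cos x := by
    have := abs_le.1 (cos_bound hx)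
    nlinarith [pow_le_one₀ (abs_nonneg x) hx (n := 4), pow_le_one₀ (abs_nonneg x) hx (n := 2),
      sq_abs x]
  have hpoly : |x + x ^ 3 / 3| ≤ 4 / 3 * |x| := by
    grw [abs_add_le, abs_div, abs_pow, pow_le_of_le_one (abs_nonneg x) hx (by norm_num : 3 ≠ 0)]
    norm_num; linarith
  have hnum : |sin x - cos x * (x + x ^ 3 / 3)| ≤ |x| ^ 5 / 4 :=
    calc |sin x - cos x * (x + x ^ 3 / 3)|
        = |x ^ 5 / 6 + (sin x - (x - x ^ 3 / 6)) - (x + x ^ 3 / 3) * (cos x - (1 - x ^ 2 / 2))| := by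
          ring_nf
      _ ≤ |x| ^ 5 / 6 + |x| ^ 5 / 100 + 4 / 3 * |x| * (|x| ^ 4 * (5 / 96)) := by
          grw [abs_sub, abs_add_le, abs_mul, sin_bound hx, cos_bound hx, hpoly, abs_div, abs_pow]
          norm_num
      _ ≤ |x| ^ 5 / 4 := by ring_nf; nlinarith [pow_nonneg (abs_nonneg x) 5]
  rw [tan_eq_sin_div_cos, div_sub' hcos_pos.ne', abs_div, abs_of_pos hcos_pos,
    div_le_iff₀ hcos_pos]
  nlinarith [pow_nonneg (abs_nonneg x) 5]

theorem abs_mul_sin_div_sub_le {a y : ℝ} (hy : 0 < y) (ha : |a| ≤ y) :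
    |y * sin (a / y) - (a - a ^ 3 / (6 * y ^ 2))| ≤ |a| ^ 5 / (100 * y ^ 4) := by
  have h := sin_bound (x := a / y) (by rwa [abs_div, abs_of_pos hy, div_le_one hy])
  calc |y * sin (a / y) - (a - a ^ 3 / (6 * y ^ 2))|
      = y * |sin (a / y) - (a / y - (a / y) ^ 3 / 6)| := by
        rw [← abs_of_pos hy, ← abs_mul, abs_of_pos hy]; congr 1; field_simp
    _ ≤ y * (|a / y| ^ 5 / 100) := by gcongr
    _ = |a| ^ 5 / (100 * y ^ 4) := by rw [abs_div, abs_of_pos hy]; field_simp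

theorem abs_mul_tan_div_sub_le {a y : ℝ} (hy : 0 < y) (ha : |a| ≤ y) :
    |y * tan (a / y) - (a + a ^ 3 / (3 * y ^ 2))| ≤ |a| ^ 5 / y ^ 4 := by
  have h := tan_bound (x := a / y) (by rwa [abs_div, abs_of_pos hy, div_le_one hy])
  calc |y * tan (a / y) - (a + a ^ 3 / (3 * y ^ 2))|
      = y * |tan (a / y) - (a / y + (a / y) ^ 3 / 3)| := by
        rw [← abs_of_pos hy, ← abs_mul, abs_of_pos hy]; congr 1; field_simp
    _ ≤ y * |a / y| ^ 5 := by gcongr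
    _ = |a| ^ 5 / y ^ 4 := by rw [abs_div, abs_of_pos hy]; field_simp

theorem abs_inv_sq_add_two_div_cube_sub_inv_sub_one_sq_le {x : ℝ} (hx : 2 ≤ x) :
    |1 / x ^ 2 + 2 / x ^ 3 - 1 / (x - 1) ^ 2| ≤ 12 / x ^ 4 := by
  have hx1 : 0 < x - 1 := by linarith
  have hx0 : 0 < x := by linarith
  have hform :
      1 / x ^ 2 + 2 / x ^ 3 - 1 / (x - 1) ^ 2 = -((3 * x - 2) / (x ^ 3 * (x - 1) ^ 2)) := by
    field_simp; ring
  have hquad : x * (3 * x - 2) ≤ 12 * (x - 1) ^ 2 := by nlinarith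
  rw [hform, abs_neg, abs_of_nonneg (div_nonneg (by linarith) (by positivity)),
    div_le_div_iff₀ (by positivity) (by positivity)]
  nlinarith [mul_le_mul_of_nonneg_left hquad (pow_pos hx0 3).le]

noncomputable def fosterSzaboArea (x : ℝ) : ℝ :=
  x / 2 * sin (π / x) - (x - 1) / 2 * tan (π / (2 * x - 2))

theorem abs_fosterSzaboArea_sub_le {x : ℝ} (hx : 4 ≤ x) :
    |fosterSzaboArea x - π / 4 + 5 * π ^ 3 / (48 * x ^ 2) + π ^ 3 / (24 * x ^ 3)|
      ≤ (π ^ 5 / 200 + π ^ 5 / 4 + π ^ 3 / 4) / x ^ 4 := by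
  have hx0 : 0 < x := by linarith
  have hπx : |π| ≤ x := by rw [abs_of_pos pi_pos]; linarith [pi_lt_four]
  set y := 2 * x - 2 with hy
  have hxy : x ≤ y := by linarith
  have hsin := abs_mul_sin_div_sub_le hx0 hπx
  have htan := abs_mul_tan_div_sub_le (hx0.trans_le hxy) (hπx.trans hxy)
  have halg := abs_inv_sq_add_two_div_cube_sub_inv_sub_one_sq_le (x := x) (by linarith)
  rw [abs_of_pos pi_pos] at hsin htan
  have htan' : π ^ 5 / y ^ 4 ≤ π ^ 5 / x ^ 4 := by gcongr
  have hsplit : (x / 2 * sin (π / x) - (x - 1) / 2 * tan (π / y))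
        - π / 4 + 5 * π ^ 3 / (48 * x ^ 2) + π ^ 3 / (24 * x ^ 3)
      = (x * sin (π / x) - (π - π ^ 3 / (6 * x ^ 2))) / 2
        - (y * tan (π / y) - (π + π ^ 3 / (3 * y ^ 2))) / 4
        + π ^ 3 / 48 * (1 / x ^ 2 + 2 / x ^ 3 - 1 / (x - 1) ^ 2) := by
    have : x - 1 ≠ 0 := by linarith
    rw [hy]; field_simp; ring
  rw [fosterSzaboArea, hsplit]
  grw [abs_add_le, abs_sub, abs_div, abs_div, abs_mul, hsin, htan, htan', halg]
  rw [abs_of_pos (by positivity : (0:ℝ) < π ^ 3 / 48), abs_two, abs_of_pos four_pos]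
  exact le_of_eq (by ring)

theorem foster_szabo_asymptotic :
    ∃ (C : ℝ) (N : ℕ), ∀ n : ℕ, N ≤ n → Even n →
      |((n : ℝ) / 2 * Real.sin (π / n) - ((n : ℝ) - 1) / 2 * Real.tan (π / (2 * n - 2)))
        - π / 4 + 5 * π ^ 3 / (48 * n ^ 2) + π ^ 3 / (24 * n ^ 3)| ≤ C / n ^ 4 :=
  ⟨_, 4, fun n hn _ => abs_fosterSzaboArea_sub_le (by exact_mod_cast hn)⟩
end

section
/- As n → ∞ through even integers, the difference between the Foster–Szabo bound and the area of the regular small n-gon satisfies Ā_n − (n/8)sin(2π/n) = π³/(16n²) + O(1/n³). -/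
open Real

lemma sin_taylor4 (x : ℝ) (h0 : 0 ≤ x) (h1 : x ≤ 1) :
    |Real.sin x - (x - x ^ 3 / 6)| ≤ x ^ 4 := by
  have h := Real.sin_bound (x := x) (by rw [abs_of_nonneg h0]; exact h1)
  rw [abs_of_nonneg h0] at h
  nlinarith [pow_nonneg h0 4]

lemma cos_lb (x : ℝ) (h0 : 0 ≤ x) (h1 : x ≤ 1/2) : (5:ℝ)/6 ≤ Real.cos x := by
  have h := Real.cos_bound (x := x) (by rw [abs_of_nonneg h0]; linarith)
  rw [abs_of_nonneg h0, abs_le] at h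
  have hx2 : x ^ 2 ≤ 1/4 := by nlinarith
  have hx4 : x ^ 4 ≤ 1/16 := by nlinarith [sq_nonneg x, sq_nonneg (x^2)]
  linarith [h.1]

lemma tan_taylor4 (x : ℝ) (h0 : 0 ≤ x) (h1 : x ≤ 1/2) :
    |Real.tan x - (x + x ^ 3 / 3)| ≤ x ^ 4 := by
  have hc : 0 < Real.cos x := Real.cos_pos_of_mem_Ioo
    ⟨by nlinarith [Real.pi_gt_three], by nlinarith [Real.pi_gt_three]⟩
  have hclb := cos_lb x h0 h1
  have hcb := Real.cos_bound (x := x) (by rw [abs_of_nonneg h0]; linarith)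
  have hsb := Real.sin_bound (x := x) (by rw [abs_of_nonneg h0]; linarith)
  rw [abs_of_nonneg h0, abs_le] at hcb hsb
  have hA : (0:ℝ) ≤ x + x ^ 3 / 3 := by positivity
  have h2u := mul_le_mul_of_nonneg_left hcb.2 hA
  have h2l := mul_le_mul_of_nonneg_left hcb.1 hA
  have hclbx := mul_le_mul_of_nonneg_right hclb (pow_nonneg h0 4)
  have hx2 : x ^ 2 ≤ 1/4 := by nlinarith
  have hx4 : x ^ 4 ≤ 1/16 := by nlinarith [sq_nonneg x, sq_nonneg (x^2)]
  have key : Real.tan x - (x + x ^ 3 / 3)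
      = (Real.sin x - (x + x ^ 3 / 3) * Real.cos x) / Real.cos x := by
    rw [Real.tan_eq_sin_div_cos]; field_simp
  rw [key, abs_div, abs_of_pos hc, div_le_iff₀ hc, abs_le]
  constructor <;> nlinarith [pow_nonneg h0 4, pow_nonneg h0 5,
    mul_nonneg (pow_nonneg h0 4) h0, mul_le_mul_of_nonneg_left hx2 (mul_nonneg (pow_nonneg h0 2) h0)]

set_option maxHeartbeats 1000000 in
theorem foster_szabo_minus_regular_asymptotic :
    ∃ (C : ℝ) (N : ℕ), ∀ n : ℕ, N ≤ n → Even n →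
      |(((n : ℝ) / 2 * Real.sin (π / n) - ((n : ℝ) - 1) / 2 * Real.tan (π / (2 * n - 2)))
          - (n : ℝ) / 8 * Real.sin (2 * π / n)) - π ^ 3 / (16 * n ^ 2)| ≤ C / n ^ 3 := by
  refine ⟨300, 8, fun n hn _ => ?_⟩
  have hn8 : (8:ℝ) ≤ (n:ℝ) := by exact_mod_cast hn
  have hπl := Real.pi_gt_three
  have hπu := Real.pi_lt_d2
  have hπ0 := Real.pi_pos
  have hnpos : (0:ℝ) < (n:ℝ) := by linarith
  have hm : (7:ℝ) ≤ (n:ℝ) - 1 := by linarith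
  have hmpos : (0:ℝ) < (n:ℝ) - 1 := by linarith
  have hdpos : (0:ℝ) < 2 * (n:ℝ) - 2 := by linarith
  set a : ℝ := π / (n:ℝ) with ha
  set c : ℝ := π / (2 * (n:ℝ) - 2) with hcc
  set b : ℝ := 2 * π / (n:ℝ) with hb
  have ha0 : 0 ≤ a := by positivity
  have ha1 : a ≤ 1 := by rw [ha, div_le_one hnpos]; linarith
  have hb0 : 0 ≤ b := by positivity
  have hb1 : b ≤ 1 := by rw [hb, div_le_one hnpos]; linarith
  have hc0 : 0 ≤ c := by positivity
  have hc1 : c ≤ 1/2 := by rw [hcc, div_le_iff₀ hdpos]; linarith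
  have hs1 := sin_taylor4 a ha0 ha1
  have hs2 := sin_taylor4 b hb0 hb1
  have ht := tan_taylor4 c hc0 hc1
  have hne1 : (n:ℝ) ≠ 0 := ne_of_gt hnpos
  have hne2 : (n:ℝ) - 1 ≠ 0 := ne_of_gt hmpos
  have hne3 : 2 * (n:ℝ) - 2 ≠ 0 := ne_of_gt hdpos
  set T1 : ℝ := (n:ℝ)/2 * (Real.sin a - (a - a^3/6)) with hT1d
  set T2 : ℝ := ((n:ℝ)-1)/2 * (Real.tan c - (c + c^3/3)) with hT2d
  set T3 : ℝ := (n:ℝ)/8 * (Real.sin b - (b - b^3/6)) with hT3d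
  set P : ℝ := π^3/(48*(n:ℝ)^2) - π^3/(48*((n:ℝ)-1)^2) with hPd
  have key : (((n : ℝ) / 2 * Real.sin a - ((n : ℝ) - 1) / 2 * Real.tan c)
          - (n : ℝ) / 8 * Real.sin b) - π ^ 3 / (16 * (n:ℝ) ^ 2)
      = T1 - T2 - T3 + P := by
    rw [hT1d, hT2d, hT3d, hPd, ha, hcc, hb]
    field_simp
    ring
  rw [key]
  -- bound each term
  have hpi2 : π^2 ≤ 9.9225 := by nlinarith
  have hpi4 : π^4 ≤ 100 := by nlinarith [sq_nonneg (π^2), hpi2, sq_nonneg π]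
  have hpi3 : π^3 ≤ 32 := by nlinarith [hpi2, sq_nonneg π]
  have hB1 : |T1| ≤ 50 / (n:ℝ)^3 := by
    rw [hT1d, abs_mul, abs_of_nonneg (by positivity : (0:ℝ) ≤ (n:ℝ)/2)]
    have h1 : (n:ℝ)/2 * |Real.sin a - (a - a^3/6)| ≤ (n:ℝ)/2 * a^4 :=
      mul_le_mul_of_nonneg_left hs1 (by positivity)
    have h2 : (n:ℝ)/2 * a^4 = π^4 / (2 * (n:ℝ)^3) := by
      rw [ha]; field_simp
    calc (n:ℝ)/2 * |Real.sin a - (a - a^3/6)| ≤ π^4 / (2*(n:ℝ)^3) := by rw [← h2]; exact h1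
      _ ≤ 100 / (2*(n:ℝ)^3) := by gcongr
      _ = 50 / (n:ℝ)^3 := by ring
  have hB3 : |T3| ≤ 200 / (n:ℝ)^3 := by
    rw [hT3d, abs_mul, abs_of_nonneg (by positivity : (0:ℝ) ≤ (n:ℝ)/8)]
    have h1 : (n:ℝ)/8 * |Real.sin b - (b - b^3/6)| ≤ (n:ℝ)/8 * b^4 :=
      mul_le_mul_of_nonneg_left hs2 (by positivity)
    have h2 : (n:ℝ)/8 * b^4 = 2 * π^4 / (n:ℝ)^3 := by
      rw [hb]; field_simp; ring
    calc (n:ℝ)/8 * |Real.sin b - (b - b^3/6)| ≤ 2*π^4 / (n:ℝ)^3 := by rw [← h2]; exact h1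
      _ ≤ 2*100 / (n:ℝ)^3 := by gcongr
      _ = 200 / (n:ℝ)^3 := by ring
  have hcube : (7/8*(n:ℝ))^3 ≤ ((n:ℝ)-1)^3 := by
    apply pow_le_pow_left₀ (by positivity) (by linarith)
  have hB2 : |T2| ≤ 5 / (n:ℝ)^3 := by
    rw [hT2d, abs_mul, abs_of_nonneg (by positivity : (0:ℝ) ≤ ((n:ℝ)-1)/2)]
    have h1 : ((n:ℝ)-1)/2 * |Real.tan c - (c + c^3/3)| ≤ ((n:ℝ)-1)/2 * c^4 :=
      mul_le_mul_of_nonneg_left ht (by positivity)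
    have h2 : ((n:ℝ)-1)/2 * c^4 = π^4 / (32 * ((n:ℝ)-1)^3) := by
      rw [hcc]
      have : 2*(n:ℝ) - 2 = 2*((n:ℝ)-1) := by ring
      rw [this]
      field_simp
      ring
    have h3 : π^4 / (32 * ((n:ℝ)-1)^3) ≤ 5 / (n:ℝ)^3 := by
      rw [div_le_div_iff₀ (by positivity) (by positivity)]
      nlinarith [mul_le_mul_of_nonneg_right hpi4 (le_of_lt (pow_pos hnpos 3)),
        mul_le_mul_of_nonneg_left hcube (by norm_num : (0:ℝ) ≤ 160)]
    calc ((n:ℝ)-1)/2 * |Real.tan c - (c + c^3/3)| ≤ π^4/(32*((n:ℝ)-1)^3) := by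
          rw [← h2]; exact h1
      _ ≤ 5 / (n:ℝ)^3 := h3
  have hsq : (7/8*(n:ℝ))^2 ≤ ((n:ℝ)-1)^2 := by
    apply pow_le_pow_left₀ (by positivity) (by linarith)
  have hBP : |P| ≤ 2 / (n:ℝ)^3 := by
    have hPval : P = -(π^3 * (2*(n:ℝ)-1) / (48 * (n:ℝ)^2 * ((n:ℝ)-1)^2)) := by
      rw [hPd]; field_simp; ring
    have hden : (0:ℝ) < 48 * (n:ℝ)^2 * ((n:ℝ)-1)^2 :=
      mul_pos (mul_pos (by norm_num) (pow_pos hnpos 2)) (pow_pos hmpos 2)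
    have hnum : (0:ℝ) ≤ π^3 * (2*(n:ℝ)-1) :=
      mul_nonneg (pow_nonneg hπ0.le 3) (by linarith)
    rw [hPval, abs_neg, abs_of_nonneg (div_nonneg hnum hden.le)]
    rw [div_le_div_iff₀ hden (pow_pos hnpos 3)]
    nlinarith [mul_le_mul_of_nonneg_right hpi3
        (mul_nonneg (by linarith : (0:ℝ) ≤ 2*(n:ℝ)-1) (pow_pos hnpos 3).le),
      mul_le_mul_of_nonneg_left hsq (show (0:ℝ) ≤ 96*(n:ℝ)^2 by positivity)]
  calc |T1 - T2 - T3 + P| ≤ |T1 - T2 - T3| + |P| := abs_add_le _ _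
    _ ≤ (|T1 - T2| + |T3|) + |P| := by linarith [abs_sub (T1 - T2) T3]
    _ ≤ ((|T1| + |T2|) + |T3|) + |P| := by linarith [abs_sub T1 T2]
    _ ≤ 50/(n:ℝ)^3 + 5/(n:ℝ)^3 + 200/(n:ℝ)^3 + 2/(n:ℝ)^3 := by linarith
    _ = 257 / (n:ℝ)^3 := by ring
    _ ≤ 300 / (n:ℝ)^3 := by
        exact (div_le_div_iff_of_pos_right (pow_pos hnpos 3)).mpr (by norm_num)
end

section
/- Let θ₀,…,θ_{m−1} be real numbers (with m = n/2) and define points v_k in ℝ² by v₀ = (0,0), x_k = Σ_{j=0}^{k−1} (−1)^j sin(Σ_{i=0}^{j} θ_i) and y_k = Σ_{j=0}^{k−1} (−1)^j cos(Σ_{i=0}^{j} θ_i). Then for 2 ≤ k < m, the quantity x_{k+1} y_{k−1} − y_{k+1} x_{k−1} equals Σ_{i=0}^{k−2} (−1)^i ( sin(Σ_{j=0}^{i+1} θ_{k−j}) − sin(Σ_{j=1}^{i+1} θ_{k−j}) ). -/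
open Real Finset

private lemma antisym_sum_zero (n : ℕ) (f : ℕ → ℕ → ℝ) (h : ∀ a b, f a b = - f b a) :
    ∑ a ∈ Finset.range n, ∑ b ∈ Finset.range n, f a b = 0 := by
  have h1 : ∑ a ∈ Finset.range n, ∑ b ∈ Finset.range n, f a b
      = ∑ a ∈ Finset.range n, ∑ b ∈ Finset.range n, f b a := Finset.sum_comm
  have h2 : ∑ a ∈ Finset.range n, ∑ b ∈ Finset.range n, f b a
      = - ∑ a ∈ Finset.range n, ∑ b ∈ Finset.range n, f a b := by
    rw [← Finset.sum_neg_distrib]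
    refine Finset.sum_congr rfl fun a _ => ?_
    rw [← Finset.sum_neg_distrib]
    exact Finset.sum_congr rfl fun b _ => h b a
  linarith

theorem triangle_area_identity (θ : ℕ → ℝ) (k : ℕ) (hk : 2 ≤ k)
    (x y : ℕ → ℝ)
    (hx : ∀ l, x l = ∑ j ∈ Finset.range l, (-1 : ℝ) ^ j * Real.sin (∑ i ∈ Finset.range (j + 1), θ i))
    (hy : ∀ l, y l = ∑ j ∈ Finset.range l, (-1 : ℝ) ^ j * Real.cos (∑ i ∈ Finset.range (j + 1), θ i)) :
    x (k + 1) * y (k - 1) - y (k + 1) * x (k - 1) =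
      ∑ i ∈ Finset.range (k - 1), (-1 : ℝ) ^ i *
        (Real.sin (∑ j ∈ Finset.range (i + 2), θ (k - j)) -
         Real.sin (∑ j ∈ Finset.Icc 1 (i + 1), θ (k - j))) := by
  obtain ⟨m, rfl⟩ := Nat.exists_eq_add_of_le hk
  simp only [show 2+m+1 = m+3 from by omega, show 2+m-1 = m+1 from by omega]
  set T : ℕ → ℝ := fun j => ∑ i ∈ Finset.range (j+1), θ i with hT
  have key : x (m+3) * y (m+1) - y (m+3) * x (m+1)
      = ∑ a ∈ Finset.range (m+3), ∑ b ∈ Finset.range (m+1),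
          (-1:ℝ)^(a+b) * Real.sin (T a - T b) := by
    rw [hx, hy, hx, hy, Finset.sum_mul_sum, Finset.sum_mul_sum,
      ← Finset.sum_sub_distrib]
    refine Finset.sum_congr rfl fun a _ => ?_
    rw [← Finset.sum_sub_distrib]
    refine Finset.sum_congr rfl fun b _ => ?_
    rw [Real.sin_sub, pow_add]
    ring
  rw [key, show m+3 = (m+1)+1+1 from rfl, Finset.sum_range_succ, Finset.sum_range_succ,
    antisym_sum_zero (m+1) _ (fun a b => by
      rw [show T a - T b = -(T b - T a) from by ring, Real.sin_neg, add_comm b a]; ring),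
    zero_add, ← Finset.sum_add_distrib, ← Finset.sum_range_reflect]
  refine Finset.sum_congr rfl fun b hb => ?_
  rw [Finset.mem_range] at hb
  obtain ⟨c, hc⟩ : ∃ c, m = b + c := ⟨m - b, by omega⟩
  subst hc
  have hr : b + c + 1 - 1 - b = c := by omega
  rw [hr]
  have claim1 : ∑ j ∈ Finset.range (b+2), θ (2+(b+c)-j) = T (b+c+2) - T c := by
    have h1 : ∑ j ∈ Finset.range (b+2), θ (2+(b+c)-j) = ∑ j ∈ Finset.range (b+2), θ (c+1+j) := by
      conv_rhs => rw [← Finset.sum_range_reflect]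
      refine Finset.sum_congr rfl fun j hj => ?_
      rw [Finset.mem_range] at hj
      congr 1; omega
    have h2 : (∑ i ∈ Finset.range (b+c+2+1), θ i)
        = (∑ i ∈ Finset.range (c+1), θ i) + ∑ j ∈ Finset.range (b+2), θ (c+1+j) := by
      rw [show b+c+2+1 = (c+1)+(b+2) from by omega]
      exact Finset.sum_range_add _ _ _
    rw [h1, hT]
    simp only
    rw [h2]
    ring
  have claim2 : ∑ j ∈ Finset.Icc 1 (b+1), θ (2+(b+c)-j) = T (b+c+1) - T c := by
    rw [← Finset.Ico_add_one_right_eq_Icc, Finset.sum_Ico_eq_sum_range]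
    have h1 : ∑ j ∈ Finset.range (b+1), θ (2+(b+c)-(1+j)) = ∑ j ∈ Finset.range (b+1), θ (c+1+j) := by
      conv_rhs => rw [← Finset.sum_range_reflect]
      refine Finset.sum_congr rfl fun j hj => ?_
      rw [Finset.mem_range] at hj
      congr 1; omega
    have h2 : (∑ i ∈ Finset.range (b+c+1+1), θ i)
        = (∑ i ∈ Finset.range (c+1), θ i) + ∑ j ∈ Finset.range (b+1), θ (c+1+j) := by
      rw [show b+c+1+1 = (c+1)+(b+1) from by omega]
      exact Finset.sum_range_add _ _ _
    rw [show b+1+1-1 = b+1 from rfl, h1, hT]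
    simp only
    rw [h2]
    ring
  rw [claim1, claim2]
  have p1 : ((-1:ℝ))^(b+c+1+c) = -(-1:ℝ)^b := by
    rw [show b+c+1+c = 2*c+(b+1) from by ring, pow_add, pow_mul]
    norm_num [pow_succ]
  have p2 : ((-1:ℝ))^(b+c+2+c) = ((-1:ℝ))^b := by
    rw [show b+c+2+c = 2*(c+1)+b from by ring, pow_add, pow_mul]
    norm_num
  rw [p1, p2]
  ring
end

section
/- Let θ₀,…,θ_{m−1} be real numbers summing to π/2, and define x_k = Σ_{j=0}^{k−1} (−1)^j sin(Σ_{i=0}^{j} θ_i). Suppose θ₀ = α, θ₁ = β + γ, θ₂ = β − γ, and θ_k = β for 3 ≤ k ≤ m−1, so that α + (m−1)β = π/2. If additionally x_{m−1} = (−1)^m/2 (with cos(β/2) ≠ 0), then sin(α + β + γ) = sin α + sin(α + 3β/2)/(2 cos(β/2)). -/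
open Real Finset

theorem three_variable_constraint (m : ℕ) (hm : 3 ≤ m) (θ : ℕ → ℝ) (α β γ : ℝ)
    (hsum : ∑ k ∈ Finset.range m, θ k = π / 2)
    (h0 : θ 0 = α) (h1 : θ 1 = β + γ) (h2 : θ 2 = β - γ)
    (hk : ∀ k, 3 ≤ k → k ≤ m - 1 → θ k = β)
    (x : ℕ → ℝ)
    (hx : ∀ l, x l = ∑ j ∈ Finset.range l, (-1 : ℝ) ^ j * Real.sin (∑ i ∈ Finset.range (j + 1), θ i))
    (hchord : x (m - 1) = (-1 : ℝ) ^ m / 2)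
    (hcos : Real.cos (β / 2) ≠ 0) :
    Real.sin (α + β + γ) = Real.sin α + Real.sin (α + 3 * β / 2) / (2 * Real.cos (β / 2)) := by
  -- partial sums
  have hS : ∀ j, 2 ≤ j → j ≤ m - 1 → ∑ i ∈ Finset.range (j+1), θ i = α + j * β := by
    intro j hj2 hjle
    induction j with
    | zero => omega
    | succ n ih =>
      rcases Nat.lt_or_ge n 2 with h | h
      · have hn : n = 1 := by omega
        subst hn
        simp [Finset.sum_range_succ, h0, h1, h2]
        ring
      · rw [Finset.sum_range_succ, ih h (by omega), hk (n+1) (by omega) (by omega)]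
        push_cast; ring
  have hm1 : (2:ℕ) ≤ m - 1 := by omega
  have hcast : ((m - 1 : ℕ) : ℝ) = (m:ℝ) - 1 := by
    push_cast [Nat.cast_sub (by omega : 1 ≤ m)]; ring
  have hAB : α + ((m:ℝ) - 1) * β = π / 2 := by
    have h := hS (m-1) hm1 le_rfl
    rw [show m - 1 + 1 = m by omega] at h
    rw [h, hcast] at hsum
    exact hsum
  -- telescoping sum
  set f : ℕ → ℝ := fun j => (-1:ℝ)^j * Real.sin (α + ((j:ℝ) - 1/2) * β) with hf
  have htel : ∀ n : ℕ, 2 ≤ n →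
      2 * Real.cos (β/2) * ∑ j ∈ Finset.Ico 2 n, (-1:ℝ)^j * Real.sin (α + j * β)
        = f 2 - f n := by
    intro n hn
    induction n with
    | zero => omega
    | succ k ih =>
      rcases Nat.lt_or_ge k 2 with h | h
      · have hk2 : k = 1 := by omega
        subst hk2
        simp [hf]
      · rw [Finset.sum_Ico_succ_top h, mul_add, ih h]
        have id1 : ∀ u v : ℝ, 2 * Real.sin u * Real.cos v = Real.sin (u+v) + Real.sin (u-v) := by
          intro u v; rw [Real.sin_add, Real.sin_sub]; ring
        have key : 2 * Real.cos (β/2) * ((-1:ℝ)^k * Real.sin (α + k * β)) = f k - f (k+1) := by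
          simp only [hf, pow_succ]
          push_cast
          rw [show α + ((k:ℝ) + 1 - 1/2) * β = (α + (k:ℝ) * β) + β/2 by ring,
              show α + ((k:ℝ) - 1/2) * β = (α + (k:ℝ) * β) - β/2 by ring]
          linear_combination ((-1:ℝ)^k) * id1 (α + (k:ℝ) * β) (β/2)
        rw [key]; ring
  -- evaluate f (m-1)
  have hfm : f (m - 1) = (-1:ℝ)^(m-1) * Real.cos (β/2) := by
    have : α + (((m-1:ℕ):ℝ) - 1/2) * β = π/2 - β/2 := by
      rw [hcast]; linarith [hAB]
    simp only [hf, this, Real.sin_pi_div_two_sub]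
  have hf2 : f 2 = Real.sin (α + 3 * β / 2) := by
    simp only [hf]
    norm_num
    ring_nf
  -- rewrite x (m-1)
  have hxval : x (m-1) = Real.sin α - Real.sin (α + β + γ)
      + ∑ j ∈ Finset.Ico 2 (m-1), (-1:ℝ)^j * Real.sin (α + j * β) := by
    rw [hx]
    have e1 : Finset.range (m-1) = Finset.Ico 0 2 ∪ Finset.Ico 2 (m-1) := by
      rw [Finset.Ico_union_Ico_eq_Ico (Nat.zero_le 2) hm1, Finset.range_eq_Ico]
    rw [e1, Finset.sum_union (Finset.Ico_disjoint_Ico_consecutive 0 2 (m-1))]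
    have h01 : ∑ j ∈ Finset.Ico 0 2, (-1:ℝ)^j * Real.sin (∑ i ∈ Finset.range (j+1), θ i)
        = Real.sin α - Real.sin (α + β + γ) := by
      rw [show Finset.Ico 0 2 = ({0, 1} : Finset ℕ) from by decide]
      simp [Finset.sum_range_succ, h0, h1]
      ring_nf
    rw [h01]
    congr 1
    apply Finset.sum_congr rfl
    intro j hj
    simp only [Finset.mem_Ico] at hj
    rw [hS j hj.1 (by omega)]
  -- combine
  have hT := htel (m-1) hm1
  rw [hf2, hfm] at hT
  rw [hxval] at hchord
  have hsgn : ((-1:ℝ)^(m-1)) = -(-1:ℝ)^m := by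
    have hmm : (-1:ℝ)^m = (-1:ℝ)^(m-1) * (-1) := by
      rw [← pow_succ, show m-1+1 = m by omega]
    rw [hmm]; ring
  rw [hsgn] at hT
  have h2c : (2:ℝ) * Real.cos (β/2) ≠ 0 := mul_ne_zero two_ne_zero hcos
  have h3 : Real.sin (α + 3 * β / 2) / (2 * Real.cos (β/2)) = Real.sin (α+β+γ) - Real.sin α := by
    rw [div_eq_iff h2c]
    linear_combination 2 * Real.cos (β/2) * hchord - hT
  rw [h3]; ring
end

section
/- The function n ↦ Ā_n = (n/2)sin(π/n) − ((n−1)/2)tan(π/(2n−2)) is strictly increasing for real n ≥ 6. -/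
open Real

lemma sinc_strictAnti : StrictAntiOn (fun x => Real.sin x / x) (Set.Ioo 0 (π/2)) := by
  apply strictAntiOn_of_deriv_neg (convex_Ioo _ _)
  · exact Real.continuous_sin.continuousOn.div continuousOn_id
      (fun x hx => ne_of_gt hx.1)
  · intro x hx
    rw [interior_Ioo] at hx
    obtain ⟨hx0, hx2⟩ := hx
    have hd : HasDerivAt (fun x => Real.sin x / x)
        ((Real.cos x * x - Real.sin x * 1) / x ^ 2) x :=
      (Real.hasDerivAt_sin x).div (hasDerivAt_id x) (ne_of_gt hx0)
    rw [hd.deriv]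
    apply div_neg_of_neg_of_pos _ (by positivity)
    have hcos : 0 < Real.cos x := Real.cos_pos_of_mem_Ioo ⟨by linarith [Real.pi_pos], hx2⟩
    have htan := Real.lt_tan hx0 hx2
    rw [Real.tan_eq_sin_div_cos] at htan
    have := (lt_div_iff₀ hcos).mp htan
    nlinarith

lemma tanc_strictMono : StrictMonoOn (fun x => Real.tan x / x) (Set.Ioo 0 (π/2)) := by
  apply strictMonoOn_of_deriv_pos (convex_Ioo _ _)
  · apply ContinuousOn.div _ continuousOn_id (fun x hx => ne_of_gt hx.1)
    intro x hx
    exact (Real.continuousAt_tan.mpr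
      (ne_of_gt (Real.cos_pos_of_mem_Ioo ⟨by linarith [Real.pi_pos, hx.1], hx.2⟩))).continuousWithinAt
  · intro x hx
    rw [interior_Ioo] at hx
    obtain ⟨hx0, hx2⟩ := hx
    have hcos : 0 < Real.cos x := Real.cos_pos_of_mem_Ioo ⟨by linarith [Real.pi_pos], hx2⟩
    have hd : HasDerivAt (fun x => Real.tan x / x)
        ((1 / Real.cos x ^ 2 * x - Real.tan x * 1) / x ^ 2) x :=
      (Real.hasDerivAt_tan (ne_of_gt hcos)).div (hasDerivAt_id x) (ne_of_gt hx0)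
    rw [hd.deriv]
    apply div_pos _ (by positivity)
    rw [Real.tan_eq_sin_div_cos]
    have hs : 0 < Real.sin x := Real.sin_pos_of_pos_of_lt_pi hx0 (by linarith [Real.pi_pos])
    have hs2 : Real.sin x < x := Real.sin_lt hx0
    have hc1 : Real.cos x ≤ 1 := Real.cos_le_one x
    rw [sub_pos, mul_one, div_lt_iff₀ hcos]
    have heq : 1 / Real.cos x ^ 2 * x * Real.cos x = x / Real.cos x := by
      field_simp
    rw [heq, lt_div_iff₀ hcos]
    nlinarith
  
theorem foster_szabo_strict_mono :
    StrictMonoOn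
      (fun x : ℝ => x / 2 * Real.sin (π / x) - (x - 1) / 2 * Real.tan (π / (2 * x - 2)))
      (Set.Ici (6 : ℝ)) := by
  intro a ha b hb hab
  simp only [Set.mem_Ici] at ha hb
  have hpi := Real.pi_pos
  have ha0 : (0:ℝ) < a := by linarith
  have hb0 : (0:ℝ) < b := by linarith
  have ha1 : (0:ℝ) < 2 * a - 2 := by linarith
  have hb1 : (0:ℝ) < 2 * b - 2 := by linarith
  -- memberships
  have hma : π / a ∈ Set.Ioo 0 (π/2) := by
    constructor
    · positivity
    · rw [div_lt_div_iff₀ ha0 (by norm_num)]; nlinarith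
  have hmb : π / b ∈ Set.Ioo 0 (π/2) := by
    constructor
    · positivity
    · rw [div_lt_div_iff₀ hb0 (by norm_num)]; nlinarith
  have hmsa : π / (2 * a - 2) ∈ Set.Ioo 0 (π/2) := by
    constructor
    · positivity
    · rw [div_lt_div_iff₀ ha1 (by norm_num)]; nlinarith
  have hmsb : π / (2 * b - 2) ∈ Set.Ioo 0 (π/2) := by
    constructor
    · positivity
    · rw [div_lt_div_iff₀ hb1 (by norm_num)]; nlinarith
  have hlt1 : π / b < π / a := by
    apply div_lt_div_of_pos_left hpi ha0 hab
  have hlt2 : π / (2 * b - 2) < π / (2 * a - 2) := by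
    apply div_lt_div_of_pos_left hpi ha1 (by linarith)
  -- rewriting identities
  have e1 : ∀ x : ℝ, 0 < x → x / 2 * Real.sin (π / x)
      = (π / 2) * (Real.sin (π / x) / (π / x)) := by
    intro x hx
    have hx' : x ≠ 0 := ne_of_gt hx
    field_simp
  have e2 : ∀ x : ℝ, 0 < 2 * x - 2 → (x - 1) / 2 * Real.tan (π / (2 * x - 2))
      = (π / 4) * (Real.tan (π / (2 * x - 2)) / (π / (2 * x - 2))) := by
    intro x hx
    have hx' : 2 * x - 2 ≠ 0 := ne_of_gt hx
    field_simp
    ring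
  simp only
  rw [e1 a ha0, e1 b hb0, e2 a ha1, e2 b hb1]
  have h1 : Real.sin (π / a) / (π / a) < Real.sin (π / b) / (π / b) :=
    sinc_strictAnti hmb hma hlt1
  have h2 : Real.tan (π / (2 * b - 2)) / (π / (2 * b - 2))
      < Real.tan (π / (2 * a - 2)) / (π / (2 * a - 2)) :=
    tanc_strictMono hmsb hmsa hlt2
  have hA : (π / 2) * (Real.sin (π / a) / (π / a)) < (π / 2) * (Real.sin (π / b) / (π / b)) :=
    mul_lt_mul_of_pos_left h1 (by positivity)
  have hB : (π / 4) * (Real.tan (π / (2 * b - 2)) / (π / (2 * b - 2)))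
      < (π / 4) * (Real.tan (π / (2 * a - 2)) / (π / (2 * a - 2))) :=
    mul_lt_mul_of_pos_left h2 (by positivity)
  linarith
end

section
/- For all even n ≥ 6, Ā_n − (n/8)sin(2π/n) > 0 and moreover n²·(Ā_n − (n/8)sin(2π/n)) ≥ π³/32 for all even n ≥ 6. -/
/-!
With `x = π / n` and `y = π / (2n - 2)`, the gap equals `π / 4 · (sin x (2 - cos x) / x - tan y / y)`,
and `π³ / 32 = π n² / 4 · x² / 8`. So it suffices that `sin x (2 - cos x) / x - tan y / y ≥ x² / 8`.
Both quotients are `1 + (·)² / 3 + O((·)⁴)`, and `y ≤ 3x / 5` once `n ≥ 6`, so the difference is at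
least about `x² / 3 - 3x² / 25`; the low-order Taylor bounds for `sin` and `cos` make this rigorous
on `0 < x ≤ 2 / 3`.
-/

open Real

lemma one_sub_sq_div_six_mul_le_sin_mul_two_sub_cos_div {x : ℝ} (hx : 0 < x) (hx1 : x ≤ 1) :
    (1 - x ^ 2 / 6) * (1 + x ^ 2 / 2 - 5 * x ^ 4 / 96) ≤ sin x * (2 - cos x) / x := by
  have hcos : cos x ≤ 1 - x ^ 2 / 2 + 5 * x ^ 4 / 96 := by
    have h := (abs_le.1 (cos_bound (by rwa [abs_of_pos hx]))).2
    rw [abs_of_pos hx] at h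
    linarith
  have hfactor : 0 ≤ 1 + x ^ 2 / 2 - 5 * x ^ 4 / 96 := by
    nlinarith [pow_le_one₀ hx.le hx1 (n := 4)]
  rw [le_div_iff₀ hx]
  calc (1 - x ^ 2 / 6) * (1 + x ^ 2 / 2 - 5 * x ^ 4 / 96) * x
      = (x - x ^ 3 / 6) * (1 + x ^ 2 / 2 - 5 * x ^ 4 / 96) := by ring
    _ ≤ sin x * (2 - cos x) :=
      mul_le_mul (sin_ge_sub_cube hx.le) (by linarith) hfactor
        (sin_nonneg_of_nonneg_of_le_pi hx.le (by linarith [pi_gt_three]))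

lemma tan_div_self_le {y : ℝ} (hy : 0 < y) (hy1 : y ≤ 1) :
    tan y / y ≤ (1 - y ^ 2 / 6 + y ^ 4 / 100) / (1 - y ^ 2 / 2) := by
  have hsin : sin y / y ≤ 1 - y ^ 2 / 6 + y ^ 4 / 100 := by
    have h := (abs_le.1 (sin_bound (by rwa [abs_of_pos hy]))).2
    rw [abs_of_pos hy] at h
    rw [div_le_iff₀ hy]
    linarith
  have hden : 0 < 1 - y ^ 2 / 2 := by nlinarith
  rw [tan_eq_sin_div_cos, div_right_comm]
  exact div_le_div₀ (by nlinarith) hsin hden one_sub_sq_div_two_le_cos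

lemma sq_div_eight_le_sin_mul_two_sub_cos_div_sub_tan_div {x y : ℝ} (hx : 0 < x)
    (hx1 : x ≤ 2 / 3) (hy : 0 < y) (hyx : y ≤ 3 * x / 5) :
    x ^ 2 / 8 ≤ sin x * (2 - cos x) / x - tan y / y := by
  have hsin := one_sub_sq_div_six_mul_le_sin_mul_two_sub_cos_div hx (by linarith)
  have htan := tan_div_self_le hy (by linarith)
  have hpoly : 1 - y ^ 2 / 6 + y ^ 4 / 100 ≤
      (1 - y ^ 2 / 2) * ((1 - x ^ 2 / 6) * (1 + x ^ 2 / 2 - 5 * x ^ 4 / 96) - x ^ 2 / 8) := by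
    have hs := sq_nonneg x
    have ht := sq_nonneg y
    have hts : y ^ 2 ≤ 9 * x ^ 2 / 25 := by nlinarith
    have hs1 : x ^ 2 ≤ 4 / 9 := by nlinarith
    nlinarith [mul_nonneg ht hs, mul_nonneg (mul_nonneg ht hs) hs, mul_nonneg hs hs,
      mul_nonneg (sub_nonneg.2 hts) hs, mul_nonneg (sub_nonneg.2 hs1) hs,
      mul_nonneg (mul_nonneg hs hs) hs, mul_nonneg (sub_nonneg.2 hts) ht]
  rw [← div_le_iff₀' (by nlinarith)] at hpoly
  linarith

lemma foster_szabo_gap_eq {n : ℝ} (hn1 : n ≠ 1) :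
    (n / 2 * sin (π / n) - (n - 1) / 2 * tan (π / (2 * n - 2))) - n / 8 * sin (2 * π / n) =
      π / 4 * (sin (π / n) * (2 - cos (π / n)) / (π / n)
        - tan (π / (2 * n - 2)) / (π / (2 * n - 2))) := by
  have h2n : 2 * n - 2 ≠ 0 := by contrapose! hn1; linarith
  rw [show 2 * π / n = 2 * (π / n) by ring, sin_two_mul]
  field_simp
  ring

theorem foster_szabo_gap_lower_bound_general (n : ℕ) (hn : 6 ≤ n) :
    0 < ((n : ℝ) / 2 * Real.sin (π / n) - ((n : ℝ) - 1) / 2 * Real.tan (π / (2 * n - 2)))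
        - (n : ℝ) / 8 * Real.sin (2 * π / n) ∧
      π ^ 3 / 32 ≤ (n : ℝ) ^ 2 *
        (((n : ℝ) / 2 * Real.sin (π / n) - ((n : ℝ) - 1) / 2 * Real.tan (π / (2 * n - 2)))
          - (n : ℝ) / 8 * Real.sin (2 * π / n)) := by
  have hn6 : (6 : ℝ) ≤ n := by exact_mod_cast hn
  have hkey := sq_div_eight_le_sin_mul_two_sub_cos_div_sub_tan_div
    (x := π / n) (y := π / (2 * n - 2)) (by positivity)
    (by rw [div_le_iff₀ (by linarith)]; nlinarith [pi_lt_d2])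
    (div_pos pi_pos (by linarith))
    (by rw [div_le_iff₀ (by linarith)]; field_simp; nlinarith [pi_pos])
  have hbound : π ^ 3 / 32 ≤ (n : ℝ) ^ 2 *
      (((n : ℝ) / 2 * Real.sin (π / n) - ((n : ℝ) - 1) / 2 * Real.tan (π / (2 * n - 2)))
        - (n : ℝ) / 8 * Real.sin (2 * π / n)) := by
    rw [foster_szabo_gap_eq (by linarith)]
    calc π ^ 3 / 32 = (n : ℝ) ^ 2 * (π / 4 * ((π / n) ^ 2 / 8)) := by field_simp; ring
      _ ≤ _ := by gcongr
  exact ⟨pos_of_mul_pos_right (lt_of_lt_of_le (by positivity) hbound) (sq_nonneg _), hbound⟩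

theorem foster_szabo_gap_lower_bound (n : ℕ) (hn : 6 ≤ n) (he : Even n) :
    0 < ((n : ℝ) / 2 * Real.sin (π / n) - ((n : ℝ) - 1) / 2 * Real.tan (π / (2 * n - 2)))
        - (n : ℝ) / 8 * Real.sin (2 * π / n) ∧
      π ^ 3 / 32 ≤ (n : ℝ) ^ 2 *
        (((n : ℝ) / 2 * Real.sin (π / n) - ((n : ℝ) - 1) / 2 * Real.tan (π / (2 * n - 2)))
          - (n : ℝ) / 8 * Real.sin (2 * π / n)) :=
  foster_szabo_gap_lower_bound_general n hn
end
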